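/- arXiv:2001.08373 — 2 statements merged into one kernel-verified Lean document; each statement's English description precedes it below -/
import Mathlib

section
/- Let p be a probability distribution on {0,1}^n with Σ_x p(x)² ≤ α/2^n for some α ≥ 1, let 0 < δ < 1, let 0 < λ ≤ ε < 1, and let c be a real number with c ≥ (1/λ) log(10√α/δ). Then 2^{2n} Σ_{s∈{0,1}^n, |s| > c} (1−ε)^{2|s|} p̂(s)² ≤ δ²/100. -/
/-- Dot product of two bit strings, `s·x = Σ_j s_j x_j`. -/
def dot {n : ℕ} (s x : Fin n → Bool) : ℕ :=
  (Finset.univ.filter fun j => s j && x j).card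

/-- Hamming weight `|s| = Σ_j s_j`. -/
def wt {n : ℕ} (s : Fin n → Bool) : ℕ :=
  (Finset.univ.filter fun j => s j).card

/-- Fourier coefficient `f̂(s) = 2^{-n} Σ_x f(x) (-1)^{s·x}`. -/
noncomputable def fhat {n : ℕ} (f : (Fin n → Bool) → ℝ) (s : Fin n → Bool) : ℝ :=
  (1 / 2 ^ n) * ∑ x, f x * (-1 : ℝ) ^ dot s x

/-!
Parseval gives `Σ_s p̂(s)² = 2^{-n} Σ_x p(x)² ≤ α / 2^{2n}`, so it suffices to bound every weight
`(1-ε)^{2|s|}` with `|s| > c` by `δ² / (100 α) = T⁻²`, where `T = 10√α/δ`. Since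
`1 - ε ≤ 1 - λ ≤ 2^{-λ}`, we get `(1-ε)^{|s|} ≤ 2^{-λ|s|} ≤ 2^{-λc} ≤ 2^{-log T} = T⁻¹`.
-/

open Finset

theorem neg_one_pow_dot_eq_prod {n : ℕ} (s x : Fin n → Bool) :
    (-1 : ℝ) ^ dot s x = ∏ j, if s j && x j then -1 else 1 := by
  rw [dot, card_filter, ← prod_pow_eq_pow_sum]
  refine prod_congr rfl fun j _ => ?_
  split_ifs <;> simp

theorem sum_bool_ite_mul_ite (a b : Bool) :
    ∑ t : Bool, (if t && a then (-1 : ℝ) else 1) * (if t && b then -1 else 1)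
      = if a = b then 2 else 0 := by
  cases a <;> cases b <;> norm_num

theorem sum_neg_one_pow_dot_mul_neg_one_pow_dot {n : ℕ} (x y : Fin n → Bool) :
    ∑ s : Fin n → Bool, (-1 : ℝ) ^ dot s x * (-1 : ℝ) ^ dot s y
      = if x = y then 2 ^ n else 0 := by
  have hfactor : ∑ s : Fin n → Bool, (-1 : ℝ) ^ dot s x * (-1 : ℝ) ^ dot s y
      = ∏ j, if x j = y j then (2 : ℝ) else 0 := by
    simp_rw [← sum_bool_ite_mul_ite, Fintype.prod_sum, neg_one_pow_dot_eq_prod,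
      ← prod_mul_distrib]
  rw [hfactor]
  split_ifs with hxy
  · simp [hxy]
  · obtain ⟨j, hj⟩ := Function.ne_iff.mp hxy
    exact prod_eq_zero (mem_univ j) (if_neg hj)

theorem sum_fhat_sq {n : ℕ} (f : (Fin n → Bool) → ℝ) :
    ∑ s, fhat f s ^ 2 = 1 / 2 ^ n * ∑ x, f x ^ 2 := by
  have h2n : (2 : ℝ) ^ n ≠ 0 := by positivity
  calc ∑ s, fhat f s ^ 2
      = (1 / 2 ^ n) ^ 2 * ∑ x, ∑ y, f x * f y *
          ∑ s : Fin n → Bool, (-1 : ℝ) ^ dot s x * (-1 : ℝ) ^ dot s y := by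
        simp_rw [fhat, mul_pow, ← mul_sum, sq (∑ x, _), sum_mul_sum, mul_sum]
        rw [sum_comm]
        refine sum_congr rfl fun x _ => ?_
        rw [sum_comm]
        refine sum_congr rfl fun y _ => sum_congr rfl fun s _ => ?_
        ring
    _ = 1 / 2 ^ n * ∑ x, f x ^ 2 := by
        simp_rw [sum_neg_one_pow_dot_mul_neg_one_pow_dot, mul_ite, mul_zero, sum_ite_eq,
          mem_univ, if_true, mul_sum]
        refine sum_congr rfl fun x _ => ?_
        field_simp

theorem sum_mul_fhat_sq_le {n : ℕ} (f : (Fin n → Bool) → ℝ) (S : Finset (Fin n → Bool))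
    (w : (Fin n → Bool) → ℝ) (B : ℝ) (hw : ∀ s ∈ S, w s ≤ B) (hB : 0 ≤ B) :
    ∑ s ∈ S, w s * fhat f s ^ 2 ≤ B * (1 / 2 ^ n * ∑ x, f x ^ 2) :=
  calc ∑ s ∈ S, w s * fhat f s ^ 2
      ≤ ∑ s ∈ S, B * fhat f s ^ 2 :=
        sum_le_sum fun s hs => mul_le_mul_of_nonneg_right (hw s hs) (sq_nonneg _)
    _ ≤ ∑ s, B * fhat f s ^ 2 :=
        sum_le_sum_of_subset_of_nonneg (subset_univ S) fun _ _ _ => by positivity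
    _ = B * (1 / 2 ^ n * ∑ x, f x ^ 2) := by rw [← mul_sum, sum_fhat_sq]

theorem one_sub_le_two_rpow_neg {t : ℝ} (ht : 0 ≤ t) : 1 - t ≤ (2 : ℝ) ^ (-t) := by
  have hlog2 : Real.log 2 ≤ 1 := (Real.log_two_lt_d9.trans (by norm_num)).le
  calc 1 - t ≤ -t * Real.log 2 + 1 := by nlinarith
    _ ≤ Real.exp (-t * Real.log 2) := Real.add_one_le_exp _
    _ = (2 : ℝ) ^ (-t) := by rw [Real.rpow_def_of_pos two_pos, mul_comm]

theorem one_sub_pow_two_mul_le_inv_sq {lam ε T : ℝ} {k : ℕ} (hlam : 0 < lam) (hlamε : lam ≤ ε)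
    (hε : ε < 1) (hT : 0 < T) (hk : Real.logb 2 T ≤ lam * k) :
    (1 - ε) ^ (2 * k) ≤ (T ^ 2)⁻¹ := by
  have hbase : 1 - ε ≤ (2 : ℝ) ^ (-lam) := by linarith [one_sub_le_two_rpow_neg hlam.le]
  have hpow : (1 - ε) ^ k ≤ T⁻¹ :=
    calc (1 - ε) ^ k ≤ ((2 : ℝ) ^ (-lam)) ^ k := by gcongr
      _ = (2 : ℝ) ^ (-(lam * k)) := by rw [← Real.rpow_mul_natCast two_pos.le, neg_mul]
      _ ≤ (2 : ℝ) ^ (-Real.logb 2 T) := by gcongr; norm_num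
      _ = T⁻¹ := by rw [Real.rpow_neg two_pos.le, Real.rpow_logb two_pos (by norm_num) hT]
  rw [pow_mul', ← inv_pow]
  exact pow_le_pow_left₀ (pow_nonneg (by linarith) k) hpow 2

theorem stmt4_general {n : ℕ} (p : (Fin n → Bool) → ℝ) (α δ lam ε c : ℝ)
    (hα : 1 ≤ α) (hp2 : ∑ x, p x ^ 2 ≤ α / 2 ^ n)
    (hδ0 : 0 < δ)
    (hlam : 0 < lam) (hlamε : lam ≤ ε) (hε : ε < 1)
    (hc : (1 / lam) * Real.logb 2 (10 * Real.sqrt α / δ) ≤ c) :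
    2 ^ (2 * n) *
        ∑ s ∈ Finset.univ.filter (fun s : Fin n → Bool => c < (wt s : ℝ)),
          (1 - ε) ^ (2 * wt s) * fhat p s ^ 2
      ≤ δ ^ 2 / 100 := by
  set T := 10 * Real.sqrt α / δ
  have hα0 : 0 < α := by linarith
  have hT : 0 < T := by positivity
  have hT2 : T ^ 2 = 100 * α / δ ^ 2 := by
    rw [div_pow, mul_pow, Real.sq_sqrt hα0.le]
    norm_num
  have hlogT : Real.logb 2 T ≤ lam * c := by
    rwa [one_div_mul_eq_div, div_le_iff₀' hlam] at hc
  have hweight : ∀ s ∈ univ.filter (fun s : Fin n → Bool => c < (wt s : ℝ)),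
      (1 - ε) ^ (2 * wt s) ≤ (T ^ 2)⁻¹ := by
    intro s hs
    refine one_sub_pow_two_mul_le_inv_sq hlam hlamε hε hT (hlogT.trans ?_)
    exact mul_le_mul_of_nonneg_left (mem_filter.mp hs).2.le hlam.le
  calc (2 : ℝ) ^ (2 * n) * ∑ s ∈ univ.filter (fun s : Fin n → Bool => c < (wt s : ℝ)),
          (1 - ε) ^ (2 * wt s) * fhat p s ^ 2
      ≤ 2 ^ (2 * n) * ((T ^ 2)⁻¹ * (1 / 2 ^ n * (α / 2 ^ n))) := by
        gcongr
        exact (sum_mul_fhat_sq_le p _ _ _ hweight (by positivity)).trans (by gcongr)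
    _ = δ ^ 2 / 100 := by
        rw [hT2]
        field_simp
        ring

theorem stmt4 {n : ℕ} (p : (Fin n → Bool) → ℝ) (α δ lam ε c : ℝ)
    (hp0 : ∀ x, 0 ≤ p x) (hp1 : ∑ x, p x = 1)
    (hα : 1 ≤ α) (hp2 : ∑ x, p x ^ 2 ≤ α / 2 ^ n)
    (hδ0 : 0 < δ) (hδ1 : δ < 1)
    (hlam : 0 < lam) (hlamε : lam ≤ ε) (hε : ε < 1)
    (hc : (1 / lam) * Real.logb 2 (10 * Real.sqrt α / δ) ≤ c) :
    2 ^ (2 * n) *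
        ∑ s ∈ Finset.univ.filter (fun s : Fin n → Bool => c < (wt s : ℝ)),
          (1 - ε) ^ (2 * wt s) * fhat p s ^ 2
      ≤ δ ^ 2 / 100 :=
  stmt4_general p α δ lam ε c hα hp2 hδ0 hlam hlamε hε hc
end

section
/- Let p be a probability distribution on {0,1}^n, let q : {0,1}^n → ℝ, and let r be a probability distribution on {0,1}^n such that ||q − r||_1 = 2 Σ_{x∈{0,1}^n : q(x) < 0} |q(x)|. If 0 < δ < 1 and ||p − q||_1 ≤ δ/3, then ||p − r||_1 ≤ δ. -/
/-!
Pass through `q`: `‖p - r‖₁ ≤ ‖p - q‖₁ + ‖q - r‖₁`. Since `p ≥ 0`, at every point where `q`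
is negative `|q x| ≤ |p x - q x|`, so the negative mass of `q`, and hence `‖q - r‖₁`, is at most
`2 ‖p - q‖₁`. Altogether `‖p - r‖₁ ≤ 3 ‖p - q‖₁ ≤ δ`.
-/

/-- The `l1` norm `‖f‖₁ = Σ_x |f(x)|`. -/
noncomputable def l1 {n : ℕ} (f : (Fin n → Bool) → ℝ) : ℝ :=
  ∑ x, |f x|

open Finset

theorem l1_sub_le_l1_sub_add_l1_sub {n : ℕ} (f g h : (Fin n → Bool) → ℝ) :
    l1 (fun x => f x - h x) ≤ l1 (fun x => f x - g x) + l1 (fun x => g x - h x) :=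
  (sum_le_sum fun x _ => abs_sub_le (f x) (g x) (h x)).trans_eq sum_add_distrib

theorem sum_abs_of_neg_le_sum_abs_sub {α : Type*} [Fintype α] {p q : α → ℝ}
    (hp : ∀ x, 0 ≤ p x) :
    ∑ x ∈ univ.filter (fun x => q x < 0), |q x| ≤ ∑ x, |p x - q x| := by
  calc ∑ x ∈ univ.filter (fun x => q x < 0), |q x|
      ≤ ∑ x ∈ univ.filter (fun x => q x < 0), |p x - q x| := by
        refine sum_le_sum fun x hx => ?_
        have hq : q x < 0 := (mem_filter.mp hx).2
        rw [abs_of_neg hq]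
        linarith [hp x, le_abs_self (p x - q x)]
    _ ≤ ∑ x, |p x - q x| :=
        sum_le_sum_of_subset_of_nonneg (filter_subset _ _) fun x _ _ => abs_nonneg _

theorem stmt6_general {n : ℕ} (p q r : (Fin n → Bool) → ℝ) (δ : ℝ)
    (hp0 : ∀ x, 0 ≤ p x)
    (hqr : l1 (fun x => q x - r x)
      = 2 * ∑ x ∈ Finset.univ.filter (fun x : Fin n → Bool => q x < 0), |q x|)
    (hpq : l1 (fun x => p x - q x) ≤ δ / 3) :
    l1 (fun x => p x - r x) ≤ δ := by
  have hneg : ∑ x ∈ univ.filter (fun x => q x < 0), |q x| ≤ l1 (fun x => p x - q x) :=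
    sum_abs_of_neg_le_sum_abs_sub hp0
  have htri := l1_sub_le_l1_sub_add_l1_sub p q r
  linarith

theorem stmt6 {n : ℕ} (p q r : (Fin n → Bool) → ℝ) (δ : ℝ)
    (hp0 : ∀ x, 0 ≤ p x) (hp1 : ∑ x, p x = 1)
    (hr0 : ∀ x, 0 ≤ r x) (hr1 : ∑ x, r x = 1)
    (hqr : l1 (fun x => q x - r x)
      = 2 * ∑ x ∈ Finset.univ.filter (fun x : Fin n → Bool => q x < 0), |q x|)
    (hδ0 : 0 < δ) (hδ1 : δ < 1)
    (hpq : l1 (fun x => p x - q x) ≤ δ / 3) :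
    l1 (fun x => p x - r x) ≤ δ :=
  stmt6_general p q r δ hp0 hqr hpq
end
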